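/- Let P = conv(v1,...,v5) be a convex lattice pentagon (vertices ordered cyclically) such that the edge from v1 to v5 contains exactly 5 lattice points (lattice length 4). Then P contains at least 9 boundary lattice points and at least 1 interior lattice point, or at least 8 boundary lattice points and at least 2 interior lattice points; in either case B + 2I − 2 ≥ 9. -/

import Mathlib

/-!
A unimodular affine change of coordinates moves the edge `v 0 v 4`, of lattice length 4, to
`[(0, 0), (4, 0)]`. Since this edge lies on the boundary, a supporting line through it puts the
other three vertices strictly on one side, say above; with the five lattice points of the edge they
give eight boundary lattice points. The three vertices cannot all have height 1 (the middle one
would not be extreme), so some vertex `(c, H)` has `H ≥ 2`, and the row `y = 1` of the triangle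
with vertices `(0, 0)`, `(4, 0)`, `(c, H)` is an open interval of length `4 - 4 / H ≥ 2`. It
contains two interior lattice points unless `H = 2` and `2 ∣ c`; then it contains one, and its
right end `(c / 2 + 2, 1)` is a lattice point of `P` that is either interior or a ninth boundary
point.
-/

/-- Embedding of lattice points of `ℤ²` into the real plane. -/
def toR (p : ℤ × ℤ) : ℝ × ℝ := ((p.1 : ℝ), (p.2 : ℝ))

open Set

theorem AffineEquiv.image_extremePoints {𝕜 E F : Type*} [Ring 𝕜] [PartialOrder 𝕜]
    [IsOrderedRing 𝕜] [AddCommGroup E] [Module 𝕜 E] [AddCommGroup F] [Module 𝕜 F]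
    (f : E ≃ᵃ[𝕜] F) (s : Set E) : f '' extremePoints 𝕜 s = extremePoints 𝕜 (f '' s) := by
  ext b
  obtain ⟨a, rfl⟩ := f.surjective b
  have : ∀ x y, f '' openSegment 𝕜 x y = openSegment 𝕜 (f x) (f y) :=
    image_openSegment _ f.toAffineMap
  simp only [mem_extremePoints, f.surjective.forall, f.injective.mem_set_image,
    f.injective.eq_iff, ← this]

theorem extremePoints_subset_frontier {E : Type*} [AddCommGroup E] [Module ℝ E]
    [TopologicalSpace E] [IsTopologicalAddGroup E] [ContinuousSMul ℝ E] [Nontrivial E]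
    (s : Set E) : extremePoints ℝ s ⊆ frontier s := fun _ hx =>
  ⟨subset_closure hx.1, disjoint_right.mp (disjoint_interior_extremePoints s) hx⟩

theorem add_smul_add_smul_mem_interior {P : Set (ℝ × ℝ)} (hP : Convex ℝ P) {a u w : ℝ × ℝ}
    (ha : a ∈ P) (hu : a + u ∈ P) (hw : a + w ∈ P) (hD : u.1 * w.2 - u.2 * w.1 ≠ 0)
    {s t : ℝ} (hs : 0 < s) (ht : 0 < t) (hst : s + t < 1) :
    a + s • u + t • w ∈ interior P := by
  set D := u.1 * w.2 - u.2 * w.1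
  -- Cramer's rule: the coordinates of `y - a` in the basis `u, w`
  let coord : ℝ × ℝ → ℝ × ℝ := fun y =>
    (((y - a).1 * w.2 - (y - a).2 * w.1) / D, (u.1 * (y - a).2 - u.2 * (y - a).1) / D)
  have hcoord : Continuous coord := by fun_prop
  have hcombo : ∀ y, a + (coord y).1 • u + (coord y).2 • w = y := by
    intro y
    ext <;> simp only [coord, Prod.fst_add, Prod.snd_add, Prod.smul_fst, Prod.smul_snd,
      Prod.fst_sub, Prod.snd_sub, smul_eq_mul] <;> field_simp <;> ring
  have hcoord_apply : coord (a + s • u + t • w) = (s, t) := by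
    ext <;> simp only [coord, Prod.fst_add, Prod.snd_add, Prod.smul_fst, Prod.smul_snd,
      Prod.fst_sub, Prod.snd_sub, smul_eq_mul] <;> field_simp <;> ring
  let T : Set (ℝ × ℝ) := {p | 0 < p.1 ∧ 0 < p.2 ∧ p.1 + p.2 < 1}
  have hT : IsOpen T :=
    (isOpen_lt continuous_const continuous_fst).inter ((isOpen_lt continuous_const
      continuous_snd).inter (isOpen_lt (continuous_fst.add continuous_snd) continuous_const))
  refine interior_maximal ?_ (hT.preimage hcoord) (by simpa [hcoord_apply, T] using ⟨hs, ht, hst⟩)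
  rintro y ⟨h₁, h₂, h₃⟩
  have hmem := hP.sum_mem (t := Finset.univ) (w := ![1 - (coord y).1 - (coord y).2,
    (coord y).1, (coord y).2]) (z := ![a, a + u, a + w])
    (by simp [Fin.forall_fin_succ]; refine ⟨by linarith, h₁.le, h₂.le⟩)
    (by simp [Fin.sum_univ_three]; ring) (by simp [Fin.forall_fin_succ, ha, hu, hw])
  rw [← hcombo y]
  convert hmem using 1
  simp only [Fin.sum_univ_three, Matrix.cons_val_zero, Matrix.cons_val_one, Matrix.cons_val_two,
    Matrix.head_cons, Matrix.tail_cons]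
  module

theorem Convex.snd_nonneg_or_nonpos {P : Set (ℝ × ℝ)} (hP : Convex ℝ P)
    (hint : (interior P).Nonempty) {a b c : ℝ} (hac : a < c) (hcb : c < b) (ha : (a, 0) ∈ P)
    (hb : (b, 0) ∈ P) (hc : (c, 0) ∉ interior P) : (∀ x ∈ P, 0 ≤ x.2) ∨ (∀ x ∈ P, x.2 ≤ 0) := by
  obtain ⟨f, u, hf, hfP, hfc⟩ := geometric_hahn_banach_of_nonempty_interior hP
    (convex_singleton _) (disjoint_singleton_right.mpr hc) hint (singleton_nonempty _)
  have hf_apply : ∀ x : ℝ × ℝ, f x = x.1 * f (1, 0) + x.2 * f (0, 1) := fun x => by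
    conv_lhs => rw [show x = x.1 • ((1 : ℝ), (0 : ℝ)) + x.2 • (0, 1) by ext <;> simp]
    simp only [map_add, map_smul, smul_eq_mul]
  have ha' := hfP _ ha
  have hb' := hfP _ hb
  have hc' := hfc _ rfl
  rw [hf_apply] at ha' hb' hc'
  simp only [zero_mul, add_zero] at ha' hb' hc'
  -- `f` is linear on the `x`-axis and its maximum over `[a, b]` is attained at the inner point `c`
  have h₁ : f (1, 0) = 0 := by nlinarith
  have h₂ : f (0, 1) ≠ 0 := fun h =>
    hf (ContinuousLinearMap.ext fun x => by rw [hf_apply, h₁, h]; simp)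
  have hP_le : ∀ x ∈ P, x.2 * f (0, 1) ≤ 0 := fun x hx => by
    have := hfP x hx
    rw [hf_apply, h₁] at this
    rw [h₁, mul_zero] at hc'
    linarith
  rcases h₂.lt_or_gt with h | h
  · exact .inl fun x hx => nonneg_of_mul_nonpos_left (hP_le x hx) h
  · exact .inr fun x hx => nonpos_of_mul_nonpos_left (hP_le x hx) h

def unimodularEquiv (R : Type*) [CommRing R] (a b c d : R) (h : a * d - b * c = 1) :
    (R × R) ≃ₗ[R] R × R where
  toFun x := (a * x.1 + b * x.2, c * x.1 + d * x.2)
  invFun x := (d * x.1 - b * x.2, a * x.2 - c * x.1)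
  map_add' x y := by ext <;> simp only [Prod.fst_add, Prod.snd_add] <;> ring
  map_smul' r x := by
    ext <;> simp only [Prod.smul_fst, Prod.smul_snd, smul_eq_mul, RingHom.id_apply] <;> ring
  left_inv x := by
    ext
    · dsimp; linear_combination x.1 * h
    · dsimp; linear_combination x.2 * h
  right_inv x := by
    ext
    · dsimp; linear_combination x.1 * h
    · dsimp; linear_combination x.2 * h

lemma toR_injective : Function.Injective toR := fun m n h => by
  simp only [toR, Prod.mk.injEq, Int.cast_inj] at h
  exact Prod.ext h.1 h.2

lemma finite_latticePoints {S : Set (ℝ × ℝ)} (hS : Bornology.IsBounded S) :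
    {m : ℤ × ℤ | toR m ∈ S}.Finite :=
  have hiso : Isometry toR :=
    (Isometry.of_dist_eq Int.dist_cast_real).prodMap (Isometry.of_dist_eq Int.dist_cast_real)
  (hiso.antilipschitz.isBounded_preimage hS).isCompact_closure.finite_of_discrete.subset
    subset_closure

noncomputable def latticeCount (S : Set (ℝ × ℝ)) : ℕ := {m : ℤ × ℤ | toR m ∈ S}.ncard

lemma ncard_le_latticeCount {S : Set (ℝ × ℝ)} (hS : Bornology.IsBounded S) {T : Set (ℤ × ℤ)}
    (hT : ∀ m ∈ T, toR m ∈ S) : T.ncard ≤ latticeCount S :=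
  ncard_le_ncard hT (finite_latticePoints hS)

lemma latticePoints_segment (n : ℤ) (hn : 0 ≤ n) :
    {m : ℤ × ℤ | toR m ∈ segment ℝ (toR (0, 0)) (toR (n, 0))} =
      (fun k : ℤ => (k, 0)) '' Icc 0 n := by
  have hseg : segment ℝ (toR (0, 0)) (toR (n, 0)) = (fun x : ℝ => (x, (0 : ℝ))) '' Icc 0 n := by
    rw [← segment_eq_Icc (by exact_mod_cast hn), Prod.image_mk_segment_left]
    simp [toR]
  ext m
  rw [mem_ofPred_eq, hseg]
  simp [toR, Prod.ext_iff, eq_comm (a := (0 : ℝ)), eq_comm (a := (0 : ℤ))]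

lemma latticeCount_segment (n : ℤ) (hn : 0 ≤ n) :
    latticeCount (segment ℝ (toR (0, 0)) (toR (n, 0))) = n.toNat + 1 := by
  rw [latticeCount, latticePoints_segment n hn,
    ncard_image_of_injective _ fun _ _ h => (Prod.ext_iff.mp h).1, ← Finset.coe_Icc,
    ncard_coe_finset, Int.card_Icc]
  omega

lemma toR_notMem_extremePoints_of_between {P : Set (ℝ × ℝ)} {a b c : ℤ × ℤ} (ha : toR a ∈ P)
    (hc : toR c ∈ P) (hab : a.1 < b.1) (hbc : b.1 < c.1) (hba : a.2 = b.2) (hbc' : c.2 = b.2) :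
    toR b ∉ extremePoints ℝ P := by
  intro hb
  have hseg : toR b ∈ openSegment ℝ (toR a) (toR c) := by
    have hac : (a.1 : ℝ) < c.1 := by exact_mod_cast hab.trans hbc
    rw [show toR a = ((a.1 : ℝ), (b.2 : ℝ)) by simp [toR, hba],
      show toR c = ((c.1 : ℝ), (b.2 : ℝ)) by simp [toR, hbc'], ← Prod.image_mk_openSegment_left,
      openSegment_eq_Ioo hac]
    exact ⟨b.1, ⟨by exact_mod_cast hab, by exact_mod_cast hbc⟩, rfl⟩
  exact hab.ne (congrArg Prod.fst (toR_injective (hb.2 ha hc hseg)))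

lemma not_three_toR_mem_extremePoints {P : Set (ℝ × ℝ)} {a b c : ℤ × ℤ} (hab : a.1 ≠ b.1)
    (hac : a.1 ≠ c.1) (hbc : b.1 ≠ c.1) (hb : b.2 = a.2) (hc : c.2 = a.2)
    (ha' : toR a ∈ extremePoints ℝ P) (hb' : toR b ∈ extremePoints ℝ P)
    (hc' : toR c ∈ extremePoints ℝ P) : False := by
  rcases (by omega : (a.1 < b.1 ∧ b.1 < c.1) ∨ (c.1 < b.1 ∧ b.1 < a.1) ∨
      (b.1 < a.1 ∧ a.1 < c.1) ∨ (c.1 < a.1 ∧ a.1 < b.1) ∨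
      (a.1 < c.1 ∧ c.1 < b.1) ∨ (b.1 < c.1 ∧ c.1 < a.1)) with h | h | h | h | h | h
  · exact toR_notMem_extremePoints_of_between ha'.1 hc'.1 h.1 h.2 (by omega) (by omega) hb'
  · exact toR_notMem_extremePoints_of_between hc'.1 ha'.1 h.1 h.2 (by omega) (by omega) hb'
  · exact toR_notMem_extremePoints_of_between hb'.1 hc'.1 h.1 h.2 (by omega) (by omega) ha'
  · exact toR_notMem_extremePoints_of_between hc'.1 hb'.1 h.1 h.2 (by omega) (by omega) ha'
  · exact toR_notMem_extremePoints_of_between ha'.1 hb'.1 h.1 h.2 (by omega) (by omega) hc'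
  · exact toR_notMem_extremePoints_of_between hb'.1 ha'.1 h.1 h.2 (by omega) (by omega) hc'

structure LatticeAffineEquiv where
  affine : (ℝ × ℝ) ≃ᵃ[ℝ] ℝ × ℝ
  lattice : ℤ × ℤ ≃ ℤ × ℤ
  affine_toR : ∀ m, affine (toR m) = toR (lattice m)

namespace LatticeAffineEquiv

def trans (L L' : LatticeAffineEquiv) : LatticeAffineEquiv where
  affine := L.affine.trans L'.affine
  lattice := L.lattice.trans L'.lattice
  affine_toR m := by simp [L.affine_toR, L'.affine_toR]

def translate (t : ℤ × ℤ) : LatticeAffineEquiv where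
  affine := AffineEquiv.constVAdd ℝ (ℝ × ℝ) (toR t)
  lattice := Equiv.addLeft t
  affine_toR m := by ext <;> simp [toR]

def ofUnimodular (a b c d : ℤ) (h : a * d - b * c = 1) : LatticeAffineEquiv where
  affine := (unimodularEquiv ℝ a b c d (by exact_mod_cast h)).toAffineEquiv
  lattice := (unimodularEquiv ℤ a b c d h).toEquiv
  affine_toR m := by ext <;> simp [toR, unimodularEquiv]

def pointReflection (c : ℤ × ℤ) : LatticeAffineEquiv where
  affine := AffineEquiv.pointReflection ℝ (toR c)
  lattice := Equiv.pointReflection c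
  affine_toR m := by ext <;> simp [toR, Equiv.pointReflection_apply]

variable (L : LatticeAffineEquiv)

lemma latticeCount_image (S : Set (ℝ × ℝ)) : latticeCount (L.affine '' S) = latticeCount S := by
  have : {m | toR m ∈ L.affine '' S} = L.lattice '' {m | toR m ∈ S} := by
    ext m
    obtain ⟨n, rfl⟩ := L.lattice.surjective m
    rw [mem_ofPred_eq, ← L.affine_toR, L.affine.injective.mem_set_image,
      L.lattice.injective.mem_set_image, mem_ofPred_eq]
  rw [latticeCount, this, ncard_image_of_injective _ L.lattice.injective, latticeCount]

lemma image_frontier (S : Set (ℝ × ℝ)) : L.affine '' frontier S = frontier (L.affine '' S) :=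
  L.affine.toContinuousAffineEquiv.toHomeomorph.image_frontier S

lemma image_interior (S : Set (ℝ × ℝ)) : L.affine '' interior S = interior (L.affine '' S) :=
  L.affine.toContinuousAffineEquiv.toHomeomorph.image_interior S

lemma image_segment (m n : ℤ × ℤ) :
    L.affine '' segment ℝ (toR m) (toR n) = segment ℝ (toR (L.lattice m)) (toR (L.lattice n)) := by
  rw [← L.affine_toR, ← L.affine_toR]
  exact _root_.image_segment ℝ L.affine.toAffineMap _ _

lemma toR_mem_extremePoints_image {S : Set (ℝ × ℝ)} {m : ℤ × ℤ}
    (hm : toR m ∈ extremePoints ℝ S) : toR (L.lattice m) ∈ extremePoints ℝ (L.affine '' S) := by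
  rw [← L.affine_toR, ← L.affine.image_extremePoints]
  exact mem_image_of_mem _ hm

lemma convex_image {P : Set (ℝ × ℝ)} (hP : Convex ℝ P) : Convex ℝ (L.affine '' P) :=
  hP.affine_image L.affine.toAffineMap

lemma isCompact_image {P : Set (ℝ × ℝ)} (hP : IsCompact P) : IsCompact (L.affine '' P) :=
  hP.image L.affine.toAffineMap.continuous_of_finiteDimensional

theorem exists_normalize {p q : ℤ × ℤ} (hpq : p ≠ q) :
    ∃ (L : LatticeAffineEquiv) (n : ℤ), 0 < n ∧ L.lattice p = (0, 0) ∧ L.lattice q = (n, 0) := by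
  have hbezout := Int.gcd_eq_gcd_ab (q - p).1 (q - p).2
  set G : ℤ := (Int.gcd (q - p).1 (q - p).2 : ℤ)
  set A := Int.gcdA (q - p).1 (q - p).2
  set B := Int.gcdB (q - p).1 (q - p).2
  obtain ⟨d₁, hd₁⟩ : G ∣ (q - p).1 := Int.gcd_dvd_left _ _
  obtain ⟨d₂, hd₂⟩ : G ∣ (q - p).2 := Int.gcd_dvd_right _ _
  simp only [Prod.fst_sub, Prod.snd_sub] at hbezout hd₁ hd₂
  have hG : 0 < G := by
    refine Int.natCast_pos.mpr (Int.gcd_pos_iff.mpr ?_)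
    by_contra! h
    exact hpq (by simpa [sub_eq_zero, Prod.ext_iff, eq_comm] using h)
  have hdet : d₁ * A + d₂ * B = 1 :=
    mul_left_cancel₀ hG.ne' (by linear_combination (-A) * hd₁ - B * hd₂ - hbezout)
  refine ⟨(translate (-p)).trans (ofUnimodular A B (-d₂) d₁ (by linear_combination hdet)), G,
    hG, ?_, ?_⟩
  · ext <;> simp [trans, translate, ofUnimodular, unimodularEquiv]
  · ext <;> simp [trans, translate, ofUnimodular, unimodularEquiv]
    · linear_combination -hbezout
    · linear_combination (-d₂) * hd₁ + d₁ * hd₂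

end LatticeAffineEquiv

section Normalized

variable {P : Set (ℝ × ℝ)}

lemma toR_row_mem_interior (hP : Convex ℝ P) (h₀ : toR (0, 0) ∈ P) (h₄ : toR (4, 0) ∈ P)
    {apex : ℤ × ℤ} (hapex : toR apex ∈ P) {k : ℤ} (hk₁ : apex.1 < apex.2 * k)
    (hk₂ : apex.2 * k < apex.1 + 4 * apex.2 - 4) : toR (k, 1) ∈ interior P := by
  obtain ⟨c, H⟩ := apex
  dsimp only at hk₁ hk₂
  have hH : (1 : ℝ) < H := by exact_mod_cast (by linarith : (1 : ℤ) < H)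
  have hk₁' : (c : ℝ) < H * k := by exact_mod_cast hk₁
  have hk₂' : (H : ℝ) * k < c + 4 * H - 4 := by exact_mod_cast hk₂
  have hs : 0 < (H * k - c : ℝ) / (4 * H) := by apply div_pos <;> linarith
  have ht : 0 < 1 / (H : ℝ) := by apply div_pos <;> linarith
  have hst : (H * k - c : ℝ) / (4 * H) + 1 / H < 1 := by
    rw [div_add_div _ _ (by positivity) (by positivity), div_lt_one (by positivity)]
    nlinarith
  have key := add_smul_add_smul_mem_interior hP h₀ (u := toR (4, 0)) (w := toR (c, H))
    (by simpa [toR] using h₄) (by simpa [toR] using hapex) (by simp [toR]; linarith) hs ht hst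
  convert key using 1
  ext
  · simp [toR]
    field_simp
    ring
  · simp [toR]
    field_simp

lemma add_ncard_le_latticeCount_frontier (hPc : IsCompact P)
    (hbase : segment ℝ (toR (0, 0)) (toR (4, 0)) ⊆ frontier P) {T : Set (ℤ × ℤ)}
    (hT : ∀ m ∈ T, toR m ∈ frontier P) (hTy : ∀ m ∈ T, 1 ≤ m.2) :
    T.ncard + 5 ≤ latticeCount (frontier P) := by
  have hbounded := hPc.isBounded.subset hPc.isClosed.frontier_subset
  have hTfin : T.Finite := (finite_latticePoints hbounded).subset hT
  set row := {m : ℤ × ℤ | toR m ∈ segment ℝ (toR (0, 0)) (toR (4, 0))} with hrow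
  have hrow_card : row.ncard = 5 := latticeCount_segment 4 (by norm_num)
  have hdisj : Disjoint row T := by
    rw [hrow, latticePoints_segment 4 (by norm_num), disjoint_left]
    rintro _ ⟨k, -, rfl⟩ hk
    exact absurd (hTy _ hk) (by norm_num)
  calc T.ncard + 5 = (row ∪ T).ncard := by
        rw [ncard_union_eq hdisj (finite_of_ncard_ne_zero (by omega)) hTfin, hrow_card, add_comm]
    _ ≤ latticeCount (frontier P) :=
        ncard_le_latticeCount hbounded (union_subset (fun m hm => hbase hm) hT)

lemma exists_mem_two_le_snd {S : Set (ℤ × ℤ)} (hS : S.ncard = 3)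
    (hSext : ∀ m ∈ S, toR m ∈ extremePoints ℝ P) (hSy : ∀ m ∈ S, 1 ≤ m.2) :
    ∃ m ∈ S, 2 ≤ m.2 := by
  by_contra! h
  obtain ⟨a, b, c, hab, hac, hbc, rfl⟩ := ncard_eq_three.mp hS
  have hy : ∀ m ∈ ({a, b, c} : Set (ℤ × ℤ)), m.2 = 1 := fun m hm => by
    linarith [hSy m hm, h m hm]
  have ha := hy a (by simp)
  have hb := hy b (by simp)
  have hc := hy c (by simp)
  exact not_three_toR_mem_extremePoints (fun h => hab (Prod.ext h (by omega)))
    (fun h => hac (Prod.ext h (by omega))) (fun h => hbc (Prod.ext h (by omega))) (by omega)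
    (by omega) (hSext a (by simp)) (hSext b (by simp)) (hSext c (by simp))

lemma exists_row_mem_interior (hP : Convex ℝ P) (h₀ : toR (0, 0) ∈ P) (h₄ : toR (4, 0) ∈ P)
    {apex : ℤ × ℤ} (hapex : toR apex ∈ P) (hH : 2 ≤ apex.2) :
    ∃ k : ℤ, toR (k, 1) ∈ interior P ∧
      (toR (k + 1, 1) ∈ interior P ∨ toR (k + 1, 1) ∈ openSegment ℝ (toR (4, 0)) (toR apex)) := by
  obtain ⟨c, H⟩ := apex
  dsimp only at hH
  have hrow := fun k => toR_row_mem_interior (k := k) hP h₀ h₄ hapex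
  -- with `c = H k + r`, the row `y = 1` of the triangle is `k + r / H < x < k + r / H + 4 - 4 / H`
  obtain ⟨k, r, rfl, hr₀, hr₁⟩ : ∃ k r, c = H * k + r ∧ 0 ≤ r ∧ r < H :=
    ⟨c / H, c % H, (Int.mul_ediv_add_emod c H).symm, Int.emod_nonneg c (by omega),
      Int.emod_lt_of_pos c (by omega)⟩
  refine ⟨k + 1, hrow _ (by linarith) (by linarith), ?_⟩
  rcases lt_or_ge (H * (k + 1 + 1)) (H * k + r + 4 * H - 4) with hlt | hge
  · exact .inl (hrow _ (by linarith) hlt)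
  obtain ⟨rfl, rfl⟩ : H = 2 ∧ r = 0 := by constructor <;> linarith
  exact .inr ⟨1 / 2, 1 / 2, by norm_num, by norm_num, by norm_num, by ext <;> simp [toR]; ring⟩

theorem latticeCount_bound_of_one_le_snd (hP : Convex ℝ P) (hPc : IsCompact P)
    (hbase : segment ℝ (toR (0, 0)) (toR (4, 0)) ⊆ frontier P) {S : Set (ℤ × ℤ)}
    (hS : S.ncard = 3) (hSext : ∀ m ∈ S, toR m ∈ extremePoints ℝ P) (hSy : ∀ m ∈ S, 1 ≤ m.2) :
    (9 ≤ latticeCount (frontier P) ∧ 1 ≤ latticeCount (interior P)) ∨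
      (8 ≤ latticeCount (frontier P) ∧ 2 ≤ latticeCount (interior P)) := by
  have hSfr : ∀ m ∈ S, toR m ∈ frontier P := fun m hm =>
    extremePoints_subset_frontier P (hSext m hm)
  have hB₈ : 8 ≤ latticeCount (frontier P) := by
    simpa [hS] using add_ncard_le_latticeCount_frontier hPc hbase hSfr hSy
  have hI : ∀ T : Set (ℤ × ℤ), (∀ m ∈ T, toR m ∈ interior P) →
      T.ncard ≤ latticeCount (interior P) :=
    fun T => ncard_le_latticeCount (hPc.isBounded.subset interior_subset)
  have hbaseP : segment ℝ (toR (0, 0)) (toR (4, 0)) ⊆ P :=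
    hbase.trans hPc.isClosed.frontier_subset
  have h₄ : toR (4, 0) ∈ P := hbaseP (right_mem_segment ..)
  obtain ⟨apex, hapexS, hH⟩ := exists_mem_two_le_snd hS hSext hSy
  have hapex := hSext apex hapexS
  obtain ⟨k, hk, hk' | hk'⟩ :=
    exists_row_mem_interior hP (hbaseP (left_mem_segment ..)) h₄ hapex.1 hH
  · exact .inr ⟨hB₈, by simpa [ncard_pair] using hI {(k, 1), (k + 1, 1)} (by simp [hk, hk'])⟩
  by_cases hqI : toR (k + 1, 1) ∈ interior P
  · exact .inr ⟨hB₈, by simpa [ncard_pair] using hI {(k, 1), (k + 1, 1)} (by simp [hk, hqI])⟩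
  refine .inl ⟨?_, by simpa using hI {(k, 1)} (by simp [hk])⟩
  have hqS : (k + 1, 1) ∉ S := fun hqS => by
    simpa [toR] using hSext _ hqS |>.2 h₄ hapex.1 hk'
  have hqfr : toR (k + 1, 1) ∈ frontier P :=
    hPc.isClosed.frontier_eq ▸ ⟨hP.openSegment_subset h₄ hapex.1 hk', hqI⟩
  have := add_ncard_le_latticeCount_frontier hPc hbase (T := insert (k + 1, 1) S)
    (forall_mem_insert.mpr ⟨hqfr, hSfr⟩) (forall_mem_insert.mpr ⟨le_rfl, hSy⟩)
  rwa [ncard_insert_of_notMem hqS (finite_of_ncard_ne_zero (by omega)), hS] at this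

theorem latticeCount_bound_of_snd_le_neg_one (hP : Convex ℝ P) (hPc : IsCompact P)
    (hbase : segment ℝ (toR (0, 0)) (toR (4, 0)) ⊆ frontier P) {S : Set (ℤ × ℤ)}
    (hS : S.ncard = 3) (hSext : ∀ m ∈ S, toR m ∈ extremePoints ℝ P) (hSy : ∀ m ∈ S, m.2 ≤ -1) :
    (9 ≤ latticeCount (frontier P) ∧ 1 ≤ latticeCount (interior P)) ∨
      (8 ≤ latticeCount (frontier P) ∧ 2 ≤ latticeCount (interior P)) := by
  let R := LatticeAffineEquiv.pointReflection (2, 0)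
  have hR : ∀ m, R.lattice m = (4 - m.1, -m.2) := fun m => by
    ext
    · simp [R, LatticeAffineEquiv.pointReflection, Equiv.pointReflection_apply]
      ring
    · simp [R, LatticeAffineEquiv.pointReflection, Equiv.pointReflection_apply]
  have hbase' : segment ℝ (toR (0, 0)) (toR (4, 0)) ⊆ frontier (R.affine '' P) := by
    rw [← R.image_frontier, segment_symm, show ((0 : ℤ), (0 : ℤ)) = R.lattice (4, 0) by simp [hR],
      show ((4 : ℤ), (0 : ℤ)) = R.lattice (0, 0) by simp [hR], ← R.image_segment]
    exact image_mono hbase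
  have := latticeCount_bound_of_one_le_snd (R.convex_image hP) (R.isCompact_image hPc) hbase'
    (S := R.lattice '' S) (by rwa [ncard_image_of_injective _ R.lattice.injective])
    (forall_mem_image.mpr fun m hm => R.toR_mem_extremePoints_image (hSext m hm))
    (forall_mem_image.mpr fun m hm => by simp [hR]; linarith [hSy m hm])
  rwa [← R.image_frontier, ← R.image_interior, R.latticeCount_image,
    R.latticeCount_image] at this

theorem latticeCount_bound_of_normalized (hP : Convex ℝ P) (hPc : IsCompact P)
    (hint : (interior P).Nonempty) {w : Fin 5 → ℤ × ℤ} (hw : Function.Injective w)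
    (hw₀ : w 0 = (0, 0)) (hw₄ : w 4 = (4, 0)) (hext : ∀ i, toR (w i) ∈ extremePoints ℝ P)
    (hbase : segment ℝ (toR (0, 0)) (toR (4, 0)) ⊆ frontier P) :
    (9 ≤ latticeCount (frontier P) ∧ 1 ≤ latticeCount (interior P)) ∨
      (8 ≤ latticeCount (frontier P) ∧ 2 ≤ latticeCount (interior P)) := by
  set S := w '' {1, 2, 3}
  have hS : S.ncard = 3 := by
    rw [ncard_image_of_injective _ hw, ncard_eq_three]
    exact ⟨1, 2, 3, by decide, by decide, by decide, rfl⟩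
  have hSext : ∀ m ∈ S, toR m ∈ extremePoints ℝ P := forall_mem_image.mpr fun i _ => hext i
  have hy : ∀ m ∈ S, m.2 ≠ 0 := by
    rintro _ ⟨i, hi, rfl⟩ hi₀
    have hi' : i ≠ 0 ∧ i ≠ 4 := by simp at hi; omega
    refine not_three_toR_mem_extremePoints (a := (0, 0)) (b := (4, 0)) (by norm_num)
      (fun h => hi'.1 (hw ?_)) (fun h => hi'.2 (hw ?_)) rfl hi₀ (hw₀ ▸ hext 0) (hw₄ ▸ hext 4)
      (hext i)
    · rw [hw₀]; exact Prod.ext h.symm hi₀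
    · rw [hw₄]; exact Prod.ext h.symm hi₀
  have hmid : ((2 : ℝ), (0 : ℝ)) ∉ interior P := fun h =>
    disjoint_interior_frontier.notMem_of_mem_left h <| hbase
      ⟨1 / 2, 1 / 2, by norm_num, by norm_num, by norm_num, by ext <;> simp [toR]; norm_num⟩
  rcases hP.snd_nonneg_or_nonpos hint (a := 0) (b := 4) two_pos (by norm_num)
    (by simpa [toR, hw₀] using (hext 0).1) (by simpa [toR, hw₄] using (hext 4).1) hmid
    with hup | hdown
  · refine latticeCount_bound_of_one_le_snd hP hPc hbase hS hSext fun m hm => ?_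
    have : (0 : ℤ) ≤ m.2 := Int.cast_nonneg_iff.mp (hup _ (hSext m hm).1)
    have := hy m hm
    omega
  · refine latticeCount_bound_of_snd_le_neg_one hP hPc hbase hS hSext fun m hm => ?_
    have : m.2 ≤ (0 : ℤ) := Int.cast_nonpos.mp (hdown _ (hSext m hm).1)
    have := hy m hm
    omega

end Normalized

/-- For a convex lattice pentagon `P = conv(v 0, …, v 4)` (vertices in cyclic order)
whose edge from `v 0` to `v 4` contains exactly 5 lattice points (lattice length 4):
either `P` has at least 9 boundary lattice points and at least 1 interior lattice
point, or at least 8 boundary lattice points and at least 2 interior lattice points;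
in either case `B + 2I − 2 ≥ 9`. -/
theorem stmt19 (v : Fin 5 → ℤ × ℤ) (P : Set (ℝ × ℝ))
    (hP : P = convexHull ℝ (Set.range (toR ∘ v)))
    (hdim : (interior P).Nonempty)
    (hinj : Function.Injective v)
    (hvert : ∀ i, toR (v i) ∈ Set.extremePoints ℝ P)
    (hedge : ∀ i : Fin 5, segment ℝ (toR (v i)) (toR (v (i + 1))) ⊆ frontier P)
    (hlen : {m : ℤ × ℤ | toR m ∈ segment ℝ (toR (v 0)) (toR (v 4))}.ncard = 5) :
    ((9 ≤ {m : ℤ × ℤ | toR m ∈ frontier P}.ncard ∧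
        1 ≤ {m : ℤ × ℤ | toR m ∈ interior P}.ncard) ∨
      (8 ≤ {m : ℤ × ℤ | toR m ∈ frontier P}.ncard ∧
        2 ≤ {m : ℤ × ℤ | toR m ∈ interior P}.ncard)) ∧
    9 ≤ {m : ℤ × ℤ | toR m ∈ frontier P}.ncard +
        2 * {m : ℤ × ℤ | toR m ∈ interior P}.ncard - 2 := by
  obtain ⟨L, n, hn, hv₀, hv₄⟩ :=
    LatticeAffineEquiv.exists_normalize (hinj.ne (by decide : (0 : Fin 5) ≠ 4))
  have hedge₀₄ := L.image_segment (v 0) (v 4)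
  rw [hv₀, hv₄] at hedge₀₄
  obtain rfl : n = 4 := by
    have := L.latticeCount_image (segment ℝ (toR (v 0)) (toR (v 4)))
    rw [hedge₀₄, latticeCount_segment n hn.le, latticeCount, hlen] at this
    omega
  have key := latticeCount_bound_of_normalized (L.convex_image (hP ▸ convex_convexHull ℝ _))
    (L.isCompact_image (hP ▸ (finite_range _).isCompact_convexHull ℝ))
    (L.image_interior P ▸ hdim.image _) (L.lattice.injective.comp hinj) hv₀ hv₄
    (fun i => L.toR_mem_extremePoints_image (hvert i))
    (by rw [← hedge₀₄, segment_symm, ← L.image_frontier]; exact image_mono (hedge 4))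
  rw [← L.image_frontier, ← L.image_interior, L.latticeCount_image, L.latticeCount_image] at key
  unfold latticeCount at key
  exact ⟨key, by omega⟩
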